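/- arXiv:1202.5440 — 9 statements merged into one kernel-verified Lean document; each statement's English description precedes it below -/
import Mathlib

section
/- Let b : ℕ → ℝ be nonnegative with b(0)=0, λ₁ > 0, R > 0, and suppose λ₁ Σ_{j=1}^∞ b(j) R^j < ∞. Define z by z(0)=1, z(n) = λ₁ Σ_{j=0}^{n-1} b(n-j) z(j) for n ≥ 1. Then Σ_{j=0}^∞ z(j) R^j < ∞ if and only if λ₁ Σ_{j=1}^∞ b(j) R^j < 1. -/
/-!
Put `c k = λ₁ b(k) Rᵏ` and `w n = z(n) Rⁿ`. Then `w` solves the same recursion with kernel `c`,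
i.e. `w = δ₀ + c ∗ w` as sequences (Cauchy product), because `c 0 = 0`. If `∑ w = S` converges, the
Cauchy product formula gives `S = 1 + (∑ c) S` with `S ≥ w 0 = 1`, hence `∑ c = 1 - 1/S < 1`.
Conversely, truncating the convolution shows that the partial sums `W` of `w` satisfy
`W ≤ 1 + (∑ c) W`, so they are bounded by `(1 - ∑ c)⁻¹` when `∑ c < 1`.
-/

open Finset

def IsRenewalSequence {R : Type*} [Semiring R] (c w : ℕ → R) : Prop :=
  w 0 = 1 ∧ ∀ n, 1 ≤ n → w n = ∑ j ∈ range n, c (n - j) * w j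

theorem sum_range_sum_antidiagonal_mul_le {R : Type*} [Semiring R] [PartialOrder R]
    [IsOrderedRing R] {f g : ℕ → R} (hf : ∀ k, 0 ≤ f k) (hg : ∀ l, 0 ≤ g l) (N : ℕ) :
    ∑ n ∈ range N, ∑ kl ∈ antidiagonal n, f kl.1 * g kl.2 ≤
      (∑ k ∈ range N, f k) * ∑ l ∈ range N, g l := by
  calc ∑ n ∈ range N, ∑ kl ∈ antidiagonal n, f kl.1 * g kl.2
      = ∑ n ∈ range N, ∑ k ∈ range (n + 1), f k * g (n - k) :=
        sum_congr rfl fun n _ => Nat.sum_antidiagonal_eq_sum_range_succ (fun k l => f k * g l) n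
    _ = ∑ k ∈ range N, ∑ l ∈ range (N - k), f k * g l := sum_range_diag_flip N fun k l => f k * g l
    _ ≤ ∑ k ∈ range N, ∑ l ∈ range N, f k * g l := by
        gcongr with k
        · exact fun l _ _ => mul_nonneg (hf k) (hg l)
        · omega
    _ = (∑ k ∈ range N, f k) * ∑ l ∈ range N, g l := by rw [sum_mul_sum]

namespace IsRenewalSequence

theorem mul_pow {R : Type*} [CommSemiring R] {c w : ℕ → R} (hw : IsRenewalSequence c w)
    (r : R) : IsRenewalSequence (fun k => c k * r ^ k) (fun n => w n * r ^ n) := by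
  refine ⟨by simp [hw.1], fun n hn => ?_⟩
  dsimp only
  rw [hw.2 n hn, sum_mul]
  refine sum_congr rfl fun j hj => ?_
  rw [← Nat.sub_add_cancel (mem_range.1 hj).le, pow_add, Nat.add_sub_cancel]
  ring

variable {c w : ℕ → ℝ}

theorem nonneg (hw : IsRenewalSequence c w) (hc : ∀ k, 0 ≤ c k) (n : ℕ) : 0 ≤ w n := by
  induction n using Nat.strong_induction_on with
  | _ n ih =>
    rcases Nat.eq_zero_or_pos n with rfl | hn
    · simp [hw.1]
    · rw [hw.2 n hn]
      exact sum_nonneg fun j hj => mul_nonneg (hc _) (ih j (mem_range.1 hj))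

theorem eq_ite_add_sum_antidiagonal (hw : IsRenewalSequence c w) (hc0 : c 0 = 0) (n : ℕ) :
    w n = (if n = 0 then 1 else 0) + ∑ kl ∈ antidiagonal n, c kl.1 * w kl.2 := by
  have hconv : ∑ kl ∈ antidiagonal n, c kl.1 * w kl.2 = ∑ j ∈ range n, c (n - j) * w j :=
    calc ∑ kl ∈ antidiagonal n, c kl.1 * w kl.2
        = ∑ kl ∈ antidiagonal n, c kl.2 * w kl.1 :=
          (Nat.sum_antidiagonal_swap (f := fun kl => c kl.1 * w kl.2)).symm
      _ = ∑ j ∈ range (n + 1), c (n - j) * w j :=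
          Nat.sum_antidiagonal_eq_sum_range_succ (fun j k => c k * w j) n
      _ = ∑ j ∈ range n, c (n - j) * w j := by
          rw [sum_range_succ, Nat.sub_self, hc0, zero_mul, add_zero]
  rw [hconv]
  rcases Nat.eq_zero_or_pos n with rfl | hn
  · simp [hw.1]
  · simp [hn.ne', hw.2 n hn]

theorem tsum_lt_one_of_summable (hw : IsRenewalSequence c w) (hc : ∀ k, 0 ≤ c k)
    (hc0 : c 0 = 0) (hcs : Summable c) (hws : Summable w) : ∑' k, c k < 1 := by
  set S := ∑' n, w n
  have hcn : Summable fun k => ‖c k‖ := summable_norm_iff.2 hcs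
  have hwn : Summable fun n => ‖w n‖ := summable_norm_iff.2 hws
  have hconv : HasSum (fun n => ∑ kl ∈ antidiagonal n, c kl.1 * w kl.2) ((∑' k, c k) * S) := by
    rw [tsum_mul_tsum_eq_tsum_sum_antidiagonal_of_summable_norm hcn hwn]
    exact (summable_norm_sum_mul_antidiagonal_of_summable_norm hcn hwn).of_norm.hasSum
  have hS : S = 1 + (∑' k, c k) * S := by
    refine hws.hasSum.unique ?_
    rw [funext (hw.eq_ite_add_sum_antidiagonal hc0)]
    exact (hasSum_ite_eq 0 1).add hconv
  have hS1 : 1 ≤ S := hw.1 ▸ hws.le_tsum 0 fun j _ => hw.nonneg hc j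
  exact lt_of_mul_lt_mul_right (by linarith : (∑' k, c k) * S < 1 * S) (by linarith)

theorem summable_of_tsum_lt_one (hw : IsRenewalSequence c w) (hc : ∀ k, 0 ≤ c k)
    (hc0 : c 0 = 0) (hcs : Summable c) (hB : ∑' k, c k < 1) : Summable w := by
  refine summable_of_sum_range_le (c := (1 - ∑' k, c k)⁻¹) (hw.nonneg hc) fun N => ?_
  set W := ∑ n ∈ range N, w n
  have hδ : ∑ n ∈ range N, (if n = 0 then (1 : ℝ) else 0) ≤ 1 := by
    rw [sum_ite_eq']
    split_ifs <;> norm_num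
  have hcN : ∑ k ∈ range N, c k ≤ ∑' k, c k := hcs.sum_le_tsum _ fun k _ => hc k
  have hW : W ≤ 1 + (∑' k, c k) * W :=
    calc W = ∑ n ∈ range N, (if n = 0 then (1 : ℝ) else 0)
          + ∑ n ∈ range N, ∑ kl ∈ antidiagonal n, c kl.1 * w kl.2 := by
          rw [← sum_add_distrib]
          exact sum_congr rfl fun n _ => hw.eq_ite_add_sum_antidiagonal hc0 n
      _ ≤ 1 + (∑ k ∈ range N, c k) * W := add_le_add hδ
          (sum_range_sum_antidiagonal_mul_le hc (hw.nonneg hc) N)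
      _ ≤ 1 + (∑' k, c k) * W := by
          gcongr
          exact sum_nonneg fun n _ => hw.nonneg hc n
  rw [← one_div, le_div_iff₀ (by linarith)]
  linarith

theorem summable_iff (hw : IsRenewalSequence c w) (hc : ∀ k, 0 ≤ c k) (hc0 : c 0 = 0)
    (hcs : Summable c) : Summable w ↔ ∑' k, c k < 1 :=
  ⟨hw.tsum_lt_one_of_summable hc hc0 hcs, hw.summable_of_tsum_lt_one hc hc0 hcs⟩

end IsRenewalSequence

theorem stmt1 (b z : ℕ → ℝ) (lam R : ℝ) (hb : ∀ n, 0 ≤ b n) (hb0 : b 0 = 0)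
    (hlam : 0 < lam) (hR : 0 < R)
    (hbsum : Summable (fun j => b j * R ^ j))
    (hz0 : z 0 = 1)
    (hz : ∀ n, 1 ≤ n → z n = lam * ∑ j ∈ Finset.range n, b (n - j) * z j) :
    Summable (fun j => z j * R ^ j) ↔ lam * ∑' j, b j * R ^ j < 1 := by
  have hren : IsRenewalSequence (fun k => lam * b k) z :=
    ⟨hz0, fun n hn => by simp_rw [hz n hn, mul_sum, mul_assoc]⟩
  have key := (hren.mul_pow R).summable_iff
    (fun k => mul_nonneg (mul_nonneg hlam.le (hb k)) (pow_nonneg hR.le k))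
    (by simp [hb0]) (by simpa only [mul_assoc] using hbsum.mul_left lam)
  simpa only [mul_assoc, tsum_mul_left] using key
end

section
/- Let b : ℕ → ℝ be nonnegative with b(0)=0, λ₁ > 0 with λ₁ Σ_{j=1}^∞ b(j) < 1, and let z solve z(0)=1, z(n) = λ₁ Σ_{j=0}^{n-1} b(n-j) z(j). If z² is summable (Σ z(j)² < ∞), then Σ_{j=1}^∞ z(j)² ≤ 1/(1 − λ₁² B²) − 1, where B = Σ_{j=1}^∞ b(j). -/
/-!
Squaring the recursion and applying Cauchy–Schwarz with the weights `b (n - j)` gives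
`z n ^ 2 ≤ λ² B ∑_{j<n} b (n - j) z j ^ 2`. Summing over `n` and exchanging the order of
summation, each `z j ^ 2` is multiplied by at most `B` more, so `S ≤ λ² B² (1 + S)` for
`S = ∑_{n ≥ 1} z n ^ 2`, and `λ² B² < 1` lets us solve for `S`.
-/

open Finset

lemma sq_sum_mul_le_sum_mul_sum_mul_sq {ι : Type*} (s : Finset ι) {f : ι → ℝ} (g : ι → ℝ)
    (hf : ∀ i ∈ s, 0 ≤ f i) :
    (∑ i ∈ s, f i * g i) ^ 2 ≤ (∑ i ∈ s, f i) * ∑ i ∈ s, f i * g i ^ 2 :=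
  sum_sq_le_sum_mul_sum_of_sq_le_mul s hf
    (fun i hi => mul_nonneg (hf i hi) (sq_nonneg _))
    fun i _ => (by ring : (f i * g i) ^ 2 = f i * (f i * g i ^ 2)).le

lemma sum_range_succ_le_tsum {b : ℕ → ℝ} (hb : ∀ n, 0 ≤ b n) (hbsum : Summable b) (m : ℕ) :
    ∑ k ∈ range m, b (k + 1) ≤ ∑' k, b k :=
  calc ∑ k ∈ range m, b (k + 1) ≤ ∑ k ∈ range (m + 1), b k := by
        rw [sum_range_succ']; linarith [hb 0]
    _ ≤ ∑' k, b k := hbsum.sum_le_tsum _ fun k _ => hb k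

section Convolution

variable {b : ℕ → ℝ} {B : ℝ}

lemma sum_range_reflect_le (hB : ∀ m, ∑ k ∈ range m, b (k + 1) ≤ B) (n : ℕ) :
    ∑ j ∈ range n, b (n - j) ≤ B := by
  have hreflect : ∑ j ∈ range n, b (n - j) = ∑ k ∈ range n, b (k + 1) := by
    rw [← sum_range_reflect (fun k => b (k + 1)) n]
    exact sum_congr rfl fun j hj => by rw [mem_range] at hj; congr 1; omega
  exact hreflect ▸ hB n

lemma sum_range_conv_le (hB : ∀ m, ∑ k ∈ range m, b (k + 1) ≤ B)
    {w : ℕ → ℝ} (hw : ∀ j, 0 ≤ w j) (N : ℕ) :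
    ∑ n ∈ range N, ∑ j ∈ range (n + 1), b (n + 1 - j) * w j ≤ B * ∑ j ∈ range N, w j := by
  have hswap : ∑ n ∈ range N, ∑ j ∈ range (n + 1), b (n + 1 - j) * w j
      = ∑ j ∈ range N, (∑ k ∈ range (N - j), b (k + 1)) * w j := by
    simp only [range_eq_Ico]
    rw [← sum_Ico_Ico_comm 0 N (fun j n => b (n + 1 - j) * w j)]
    refine sum_congr rfl fun j _ => ?_
    rw [sum_mul, ← range_eq_Ico, sum_Ico_eq_sum_range]
    exact sum_congr rfl fun k _ => by congr 2; omega
  rw [hswap, mul_sum]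
  exact sum_le_sum fun j _ => mul_le_mul_of_nonneg_right (hB _) (hw j)

variable {z : ℕ → ℝ} {lam : ℝ}

lemma sq_le_of_conv_eq (hb : ∀ n, 0 ≤ b n) (hB : ∀ m, ∑ k ∈ range m, b (k + 1) ≤ B) {n : ℕ}
    (hz : z n = lam * ∑ j ∈ range n, b (n - j) * z j) :
    z n ^ 2 ≤ lam ^ 2 * B * ∑ j ∈ range n, b (n - j) * z j ^ 2 := by
  have hnonneg : 0 ≤ ∑ j ∈ range n, b (n - j) * z j ^ 2 :=
    sum_nonneg fun j _ => mul_nonneg (hb _) (sq_nonneg _)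
  calc z n ^ 2 = lam ^ 2 * (∑ j ∈ range n, b (n - j) * z j) ^ 2 := by rw [hz, mul_pow]
    _ ≤ lam ^ 2 * ((∑ j ∈ range n, b (n - j)) * ∑ j ∈ range n, b (n - j) * z j ^ 2) := by
      gcongr
      exact sq_sum_mul_le_sum_mul_sum_mul_sq _ _ fun j _ => hb _
    _ ≤ lam ^ 2 * B * ∑ j ∈ range n, b (n - j) * z j ^ 2 := by
      rw [mul_assoc]
      gcongr
      exact sum_range_reflect_le hB n

lemma sum_range_sq_succ_le_of_conv_eq (hb : ∀ n, 0 ≤ b n)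
    (hB : ∀ m, ∑ k ∈ range m, b (k + 1) ≤ B) (hB0 : 0 ≤ B)
    (hz : ∀ n, 1 ≤ n → z n = lam * ∑ j ∈ range n, b (n - j) * z j) (N : ℕ) :
    ∑ n ∈ range N, z (n + 1) ^ 2 ≤ lam ^ 2 * B ^ 2 * ∑ j ∈ range N, z j ^ 2 :=
  calc ∑ n ∈ range N, z (n + 1) ^ 2
      ≤ ∑ n ∈ range N, lam ^ 2 * B * ∑ j ∈ range (n + 1), b (n + 1 - j) * z j ^ 2 :=
        sum_le_sum fun n _ => sq_le_of_conv_eq hb hB (hz (n + 1) n.succ_pos)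
    _ = lam ^ 2 * B * ∑ n ∈ range N, ∑ j ∈ range (n + 1), b (n + 1 - j) * z j ^ 2 :=
        (mul_sum ..).symm
    _ ≤ lam ^ 2 * B * (B * ∑ j ∈ range N, z j ^ 2) := by
        gcongr
        exact sum_range_conv_le hB (fun j => sq_nonneg _) N
    _ = lam ^ 2 * B ^ 2 * ∑ j ∈ range N, z j ^ 2 := by ring

end Convolution

theorem stmt2_general (b z : ℕ → ℝ) (lam : ℝ) (hb : ∀ n, 0 ≤ b n)
    (hlam : 0 < lam) (hbsum : Summable b) (hlt : lam * ∑' j, b j < 1)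
    (hz0 : z 0 = 1)
    (hz : ∀ n, 1 ≤ n → z n = lam * ∑ j ∈ Finset.range n, b (n - j) * z j)
    (hz2 : Summable (fun j => (z j) ^ 2)) :
    ∑' j, (z (j + 1)) ^ 2 ≤ 1 / (1 - lam ^ 2 * (∑' j, b j) ^ 2) - 1 := by
  set B := ∑' j, b j
  set S := ∑' j, z (j + 1) ^ 2
  have hB0 : 0 ≤ B := tsum_nonneg hb
  have hq : lam ^ 2 * B ^ 2 < 1 := by nlinarith [mul_nonneg hlam.le hB0]
  have htotal : ∑' j, z j ^ 2 = 1 + S := by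
    rw [hz2.tsum_eq_zero_add, hz0, one_pow]
  have hkey : S ≤ lam ^ 2 * B ^ 2 * (1 + S) := by
    refine ((summable_nat_add_iff 1).mpr hz2).tsum_le_of_sum_range_le fun N => ?_
    calc ∑ n ∈ range N, z (n + 1) ^ 2 ≤ lam ^ 2 * B ^ 2 * ∑ j ∈ range N, z j ^ 2 :=
          sum_range_sq_succ_le_of_conv_eq hb (sum_range_succ_le_tsum hb hbsum) hB0 hz N
      _ ≤ lam ^ 2 * B ^ 2 * (1 + S) := by
          gcongr
          exact htotal ▸ hz2.sum_le_tsum _ fun j _ => sq_nonneg _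
  rw [div_sub_one (by linarith), le_div_iff₀ (by linarith)]
  linarith

theorem stmt2 (b z : ℕ → ℝ) (lam : ℝ) (hb : ∀ n, 0 ≤ b n) (hb0 : b 0 = 0)
    (hlam : 0 < lam) (hbsum : Summable b) (hlt : lam * ∑' j, b j < 1)
    (hz0 : z 0 = 1)
    (hz : ∀ n, 1 ≤ n → z n = lam * ∑ j ∈ Finset.range n, b (n - j) * z j)
    (hz2 : Summable (fun j => (z j) ^ 2)) :
    ∑' j, (z (j + 1)) ^ 2 ≤ 1 / (1 - lam ^ 2 * (∑' j, b j) ^ 2) - 1 :=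
  stmt2_general b z lam hb hlam hbsum hlt hz0 hz hz2
end

section
/- Let b : ℕ → ℝ be nonnegative with b(0)=0, λ₁ > 0, B = Σ_{j=1}^∞ b(j), with λ₁ B < 1, and let z solve z(0)=1, z(n) = λ₁ Σ_{j=0}^{n-1} b(n-j) z(j). If z² is summable, then Σ_{n=1}^∞ z(n)² ≤ (λ₁² / (1 − λ₁ B)²) · Σ_{j=1}^∞ b(j)². -/
/-!
Summing the recursion gives `∑ z ≤ 1 + λ B ∑ z`, so the total mass of `z` is at most
`1 / (1 - λ B)`. Cauchy–Schwarz with weights `z j` bounds `z n ^ 2` by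
`λ² (∑_{j<n} z j) (∑_{j<n} b (n - j) ^ 2 z j)`, and summing the last factor over `n`
(a convolution of `b²` with `z`) costs another factor `(∑ b²) / (1 - λ B)`.
-/

open Finset

lemma sum_range_sum_range_mul_le_tsum_mul {f g : ℕ → ℝ} (hf : ∀ k, 0 ≤ f k) (hfs : Summable f)
    (hg : ∀ j, 0 ≤ g j) (N : ℕ) :
    ∑ n ∈ range N, ∑ j ∈ range n, f (n - j) * g j ≤ (∑' k, f k) * ∑ j ∈ range N, g j := by
  have tail : ∀ j, ∑ n ∈ Ico (j + 1) N, f (n - j) ≤ ∑' k, f k := by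
    intro j
    rw [sum_Ico_eq_sum_range]
    calc ∑ i ∈ range (N - (j + 1)), f (j + 1 + i - j)
        = ∑ i ∈ range (N - (j + 1)), f (i + 1) := sum_congr rfl fun i _ => by congr 1; omega
      _ ≤ ∑ i ∈ range (N - (j + 1) + 1), f i := by rw [sum_range_succ']; linarith [hf 0]
      _ ≤ ∑' k, f k := hfs.sum_le_tsum _ fun i _ => hf i
  calc ∑ n ∈ range N, ∑ j ∈ range n, f (n - j) * g j
      = ∑ j ∈ range N, (∑ n ∈ Ico (j + 1) N, f (n - j)) * g j := by
        simp only [← Nat.Ico_zero_eq_range, sum_mul]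
        exact (sum_Ico_Ico_comm' 0 N _).symm
    _ ≤ ∑ j ∈ range N, (∑' k, f k) * g j :=
        sum_le_sum fun j _ => mul_le_mul_of_nonneg_right (tail j) (hg j)
    _ = (∑' k, f k) * ∑ j ∈ range N, g j := (mul_sum ..).symm

section Renewal

variable {b z : ℕ → ℝ} {lam : ℝ}

lemma renewal_nonneg (hlam : 0 ≤ lam) (hb : ∀ n, 0 ≤ b n) (hz0 : z 0 = 1)
    (hz : ∀ n, 1 ≤ n → z n = lam * ∑ j ∈ range n, b (n - j) * z j) (n : ℕ) : 0 ≤ z n := by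
  induction n using Nat.strong_induction_on with
  | _ n ih =>
    rcases Nat.eq_zero_or_pos n with rfl | hn
    · exact hz0 ▸ zero_le_one
    · rw [hz n hn]
      exact mul_nonneg hlam <| sum_nonneg fun j hj => mul_nonneg (hb _) (ih j (mem_range.mp hj))

lemma renewal_sum_range_le_one_add (hz0 : z 0 = 1)
    (hz : ∀ n, 1 ≤ n → z n = lam * ∑ j ∈ range n, b (n - j) * z j) (N : ℕ) :
    ∑ n ∈ range N, z n ≤ 1 + lam * ∑ n ∈ range N, ∑ j ∈ range n, b (n - j) * z j := by
  cases N with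
  | zero => simp
  | succ M =>
    rw [sum_range_succ', sum_range_succ' (fun n => ∑ j ∈ range n, b (n - j) * z j), mul_add,
      mul_sum, hz0]
    simp [← hz _ (Nat.succ_pos _), add_comm]

lemma renewal_sum_range_le_inv (hlam : 0 ≤ lam) (hb : ∀ n, 0 ≤ b n) (hbsum : Summable b)
    (hlt : lam * ∑' j, b j < 1) (hz0 : z 0 = 1)
    (hz : ∀ n, 1 ≤ n → z n = lam * ∑ j ∈ range n, b (n - j) * z j) (N : ℕ) :
    ∑ n ∈ range N, z n ≤ (1 - lam * ∑' j, b j)⁻¹ := by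
  have hconv := mul_le_mul_of_nonneg_left
    (sum_range_sum_range_mul_le_tsum_mul hb hbsum (renewal_nonneg hlam hb hz0 hz) N) hlam
  have hrec := renewal_sum_range_le_one_add hz0 hz N
  rw [← one_div, le_div_iff₀ (by linarith)]
  linarith

lemma renewal_sq_le (hznn : ∀ n, 0 ≤ z n)
    (hz : ∀ n, 1 ≤ n → z n = lam * ∑ j ∈ range n, b (n - j) * z j) (n : ℕ) :
    z (n + 1) ^ 2 ≤
      lam ^ 2 * (∑ j ∈ range (n + 1), z j) * ∑ j ∈ range (n + 1), b (n + 1 - j) ^ 2 * z j := by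
  rw [hz (n + 1) n.succ_pos, mul_pow, mul_assoc]
  gcongr
  exact sum_sq_le_sum_mul_sum_of_sq_le_mul _ (fun j _ => hznn j)
    (fun j _ => mul_nonneg (sq_nonneg _) (hznn j)) (fun j _ => le_of_eq (by ring))

end Renewal

theorem stmt3_general (b z : ℕ → ℝ) (lam : ℝ) (hb : ∀ n, 0 ≤ b n)
    (hlam : 0 < lam) (hbsum : Summable b) (hb2sum : Summable (fun j => (b j) ^ 2))
    (hlt : lam * ∑' j, b j < 1)
    (hz0 : z 0 = 1)
    (hz : ∀ n, 1 ≤ n → z n = lam * ∑ j ∈ Finset.range n, b (n - j) * z j) :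
    ∑' n, (z (n + 1)) ^ 2 ≤ lam ^ 2 / (1 - lam * ∑' j, b j) ^ 2 * ∑' j, (b j) ^ 2 := by
  set S := (1 - lam * ∑' j, b j)⁻¹ with hS
  have hznn := renewal_nonneg hlam.le hb hz0 hz
  have hmass := renewal_sum_range_le_inv hlam.le hb hbsum hlt hz0 hz
  have hconv := sum_range_sum_range_mul_le_tsum_mul (fun k => sq_nonneg (b k)) hb2sum hznn
  refine (Real.tsum_le_of_sum_range_le (fun n => sq_nonneg _) fun N => ?_).trans_eq
    (show lam ^ 2 * S * ((∑' k, b k ^ 2) * S) = _ by rw [hS, div_eq_mul_inv, ← inv_pow]; ring)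
  calc ∑ n ∈ range N, z (n + 1) ^ 2
      ≤ ∑ n ∈ range N, lam ^ 2 * S * ∑ j ∈ range (n + 1), b (n + 1 - j) ^ 2 * z j :=
        sum_le_sum fun n _ => (renewal_sq_le hznn hz n).trans <| by
          gcongr
          · exact sum_nonneg fun j _ => mul_nonneg (sq_nonneg _) (hznn j)
          · exact hmass _
    _ = lam ^ 2 * S * ∑ m ∈ range (N + 1), ∑ j ∈ range m, b (m - j) ^ 2 * z j := by
        rw [mul_sum, sum_range_succ' _ N]; simp
    _ ≤ lam ^ 2 * S * ((∑' k, b k ^ 2) * S) := by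
        gcongr
        exact (hconv (N + 1)).trans (by gcongr; exact hmass _)

theorem stmt3 (b z : ℕ → ℝ) (lam : ℝ) (hb : ∀ n, 0 ≤ b n) (hb0 : b 0 = 0)
    (hlam : 0 < lam) (hbsum : Summable b) (hb2sum : Summable (fun j => (b j) ^ 2))
    (hlt : lam * ∑' j, b j < 1)
    (hz0 : z 0 = 1)
    (hz : ∀ n, 1 ≤ n → z n = lam * ∑ j ∈ Finset.range n, b (n - j) * z j)
    (hz2 : Summable (fun j => (z j) ^ 2)) :
    ∑' n, (z (n + 1)) ^ 2 ≤ lam ^ 2 / (1 - lam * ∑' j, b j) ^ 2 * ∑' j, (b j) ^ 2 :=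
  stmt3_general b z lam hb hlam hbsum hb2sum hlt hz0 hz
end

section
/- Let z : ℕ → ℝ be nonnegative with Σ_{j=0}^∞ z(j) r^{-j} < ∞ for some r ∈ (0,1), z(n) > 0 for all n, and suppose lim_{n→∞} z(n+1)/z(n) = r. Then with χ_z(k) = Σ_{j=0}^∞ z(j) z(k+j), one has lim_{k→∞} χ_z(k)/z(k) = Σ_{j=0}^∞ z(j) r^j. -/
/-!
Write `χ_z(k) / z(k) = ∑ j, z(j) · (z(k+j) / z(k))`. Telescoping the ratios, `z(k+j) / z(k) → r^j`
for each fixed `j`. Since the ratios eventually stay below `1`, `z` is eventually decreasing, so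
`z(j) · z(k+j) / z(k) ≤ z(j)` for large `k`, and `z` is summable by the ratio test. Dominated
convergence for series (Tannery's theorem) then passes the limit inside the sum.
-/

open Filter Topology

theorem tendsto_shift_div_of_tendsto_succ_div {K : Type*} [Field K] [TopologicalSpace K]
    [ContinuousMul K] {z : ℕ → K} {r : K} (hz : ∀ n, z n ≠ 0)
    (hlim : Tendsto (fun n => z (n + 1) / z n) atTop (𝓝 r)) (j : ℕ) :
    Tendsto (fun k => z (k + j) / z k) atTop (𝓝 (r ^ j)) := by
  induction j with
  | zero => simpa [div_self (hz _)] using tendsto_const_nhds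
  | succ j ih =>
    have hstep : Tendsto (fun k => z (k + j + 1) / z (k + j)) atTop (𝓝 r) :=
      hlim.comp (tendsto_add_atTop_nat j)
    rw [pow_succ']
    exact (hstep.mul ih).congr fun k => div_mul_div_cancel₀ (hz (k + j))

theorem eventually_forall_shift_le_of_tendsto_succ_div {z : ℕ → ℝ} {r : ℝ} (hz : ∀ n, 0 < z n)
    (hr : r < 1) (hlim : Tendsto (fun n => z (n + 1) / z n) atTop (𝓝 r)) :
    ∀ᶠ k in atTop, ∀ j, z (k + j) ≤ z k := by
  obtain ⟨N, hN⟩ := eventually_atTop.mp (hlim.eventually_le_const hr)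
  have hanti : AntitoneOn z {n | N ≤ n} :=
    antitoneOn_nat_Ici_of_succ_le fun n hn => (div_le_one (hz n)).mp (hN n hn)
  filter_upwards [eventually_ge_atTop N] with k hk j
  exact hanti hk (le_trans hk (Nat.le_add_right k j)) (Nat.le_add_right k j)

theorem summable_of_pos_of_tendsto_succ_div {z : ℕ → ℝ} {r : ℝ} (hz : ∀ n, 0 < z n)
    (hr : r < 1) (hlim : Tendsto (fun n => z (n + 1) / z n) atTop (𝓝 r)) : Summable z := by
  refine summable_of_ratio_test_tendsto_lt_one hr (.of_forall fun n => (hz n).ne') ?_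
  simpa only [Real.norm_of_nonneg (hz _).le] using hlim

theorem stmt5_general (z : ℕ → ℝ) (r : ℝ) (hr : r ∈ Set.Ioo (0 : ℝ) 1)
    (hz : ∀ n, 0 < z n)
    (hlim : Filter.Tendsto (fun n => z (n + 1) / z n) Filter.atTop (nhds r)) :
    Filter.Tendsto (fun k => (∑' j, z j * z (k + j)) / z k) Filter.atTop
      (nhds (∑' j, z j * r ^ j)) := by
  have hterm (j : ℕ) : Tendsto (fun k => z j * (z (k + j) / z k)) atTop (𝓝 (z j * r ^ j)) :=
    tendsto_const_nhds.mul (tendsto_shift_div_of_tendsto_succ_div (fun n => (hz n).ne') hlim j)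
  have hbound : ∀ᶠ k in atTop, ∀ j, ‖z j * (z (k + j) / z k)‖ ≤ z j := by
    filter_upwards [eventually_forall_shift_le_of_tendsto_succ_div hz hr.2 hlim] with k hk j
    rw [Real.norm_of_nonneg (mul_nonneg (hz j).le (div_nonneg (hz _).le (hz k).le))]
    exact mul_le_of_le_one_right (hz j).le ((div_le_one (hz k)).mpr (hk j))
  refine (tendsto_tsum_of_dominated_convergence
    (summable_of_pos_of_tendsto_succ_div hz hr.2 hlim) hterm hbound).congr fun k => ?_
  simp only [← tsum_div_const, mul_div_assoc]

theorem stmt5 (z : ℕ → ℝ) (r : ℝ) (hr : r ∈ Set.Ioo (0 : ℝ) 1)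
    (hz : ∀ n, 0 < z n)
    (hsum : Summable (fun j => z j * (r⁻¹) ^ j))
    (hlim : Filter.Tendsto (fun n => z (n + 1) / z n) Filter.atTop (nhds r)) :
    Filter.Tendsto (fun k => (∑' j, z j * z (k + j)) / z k) Filter.atTop
      (nhds (∑' j, z j * r ^ j)) :=
  stmt5_general z r hr hz hlim
end

section
/- Let z : ℕ → ℝ be nonnegative with s := Σ_{j=1}^∞ z(j) r^j < 1 for r ∈ (0,1], and define U₁ = 1, L_m = 1 − s·U_m, U_{m+1} = 1 − (Σ_{j=1}^m z(j) r^j)·L_m. Then lim_{m→∞} U_m = lim_{m→∞} L_m = 1/(1+s). -/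
theorem stmt6 (z : ℕ → ℝ) (r : ℝ) (U L : ℕ → ℝ)
    (hz : ∀ n, 0 ≤ z n) (hr : r ∈ Set.Ioc (0 : ℝ) 1)
    (hsum : Summable (fun j => z (j + 1) * r ^ (j + 1)))
    (hs : (∑' j, z (j + 1) * r ^ (j + 1)) < 1)
    (hU1 : U 1 = 1)
    (hL : ∀ m, 1 ≤ m → L m = 1 - (∑' j, z (j + 1) * r ^ (j + 1)) * U m)
    (hU : ∀ m, 1 ≤ m →
      U (m + 1) = 1 - (∑ j ∈ Finset.range m, z (j + 1) * r ^ (j + 1)) * L m) :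
    Filter.Tendsto U Filter.atTop (nhds (1 / (1 + ∑' j, z (j + 1) * r ^ (j + 1)))) ∧
    Filter.Tendsto L Filter.atTop (nhds (1 / (1 + ∑' j, z (j + 1) * r ^ (j + 1)))) := by
  set s : ℝ := ∑' j, z (j + 1) * r ^ (j + 1) with hs_def
  set sm : ℕ → ℝ := fun m => ∑ j ∈ Finset.range m, z (j + 1) * r ^ (j + 1) with hsm_def
  have hterm : ∀ j, 0 ≤ z (j + 1) * r ^ (j + 1) := fun j =>
    mul_nonneg (hz _) (pow_nonneg hr.1.le _)
  have hs0 : 0 ≤ s := tsum_nonneg hterm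
  have hsm_le : ∀ m, sm m ≤ s := fun m => Summable.sum_le_tsum _ (fun i _ => hterm i) hsum
  have hsm_nonneg : ∀ m, 0 ≤ sm m := fun m => Finset.sum_nonneg fun i _ => hterm i
  have hsm_tendsto : Filter.Tendsto sm Filter.atTop (nhds s) := hsum.hasSum.tendsto_sum_nat
  set l : ℝ := 1 / (1 + s) with hl_def
  have h1s : 0 < 1 + s := by linarith
  have hl : l * (1 + s) = 1 := by
    rw [hl_def, div_mul_eq_mul_div, one_mul, div_self h1s.ne']
  have hl0 : 0 < l := by positivity
  -- key recursion
  have hrec : ∀ m, 1 ≤ m → U (m + 1) - l = sm m * s * (U m - l) + l * (s - sm m) := by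
    intro m hm
    rw [hU m hm, hL m hm]
    linear_combination (sm m - 1) * hl
  have hc1 : s * s < 1 := by nlinarith
  have hc0 : 0 ≤ s * s := mul_nonneg hs0 hs0
  have hUtend : Filter.Tendsto U Filter.atTop (nhds l) := by
    rw [Metric.tendsto_atTop]
    intro ε hε
    set c : ℝ := s * s with hc
    set δ : ℝ := ε * (1 - c) / 2 with hδ
    have hδ0 : 0 < δ := by
      have : 0 < 1 - c := by linarith
      positivity
    -- choose N with s - sm m small
    obtain ⟨N₀, hN₀⟩ := (Metric.tendsto_atTop.mp hsm_tendsto) (δ / l) (by positivity)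
    set N : ℕ := max N₀ 1 with hN_def
    have hN1 : 1 ≤ N := le_max_right _ _
    have hsmall : ∀ m, N ≤ m → l * (s - sm m) ≤ δ := by
      intro m hm
      have h1 := hN₀ m (le_trans (le_max_left _ _) hm)
      rw [Real.dist_eq, abs_lt] at h1
      have : s - sm m ≤ δ / l := by linarith
      calc l * (s - sm m) ≤ l * (δ / l) := by
            exact mul_le_mul_of_nonneg_left this hl0.le
        _ = δ := by field_simp
    -- step inequality
    have hstep : ∀ m, N ≤ m → |U (m + 1) - l| ≤ c * |U m - l| + δ := by
      intro m hm
      have h1 : 1 ≤ m := le_trans hN1 hm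
      rw [hrec m h1]
      calc |sm m * s * (U m - l) + l * (s - sm m)|
          ≤ |sm m * s * (U m - l)| + |l * (s - sm m)| := abs_add_le _ _
        _ = sm m * s * |U m - l| + l * (s - sm m) := by
            rw [abs_mul, abs_of_nonneg (mul_nonneg (hsm_nonneg m) hs0),
              abs_of_nonneg (mul_nonneg hl0.le (by linarith [hsm_le m]))]
        _ ≤ c * |U m - l| + δ := by
            have h2 : sm m * s ≤ c := by
              have := hsm_le m
              nlinarith [hsm_nonneg m]
            have h3 := hsmall m hm
            nlinarith [abs_nonneg (U m - l)]
    -- induction bound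
    have key : ∀ k, |U (N + k) - l| ≤ c ^ k * |U N - l| + ε / 2 := by
      intro k
      induction k with
      | zero => simp; linarith
      | succ k ih =>
          have h4 := hstep (N + k) (Nat.le_add_right _ _)
          have h5 : c * |U (N + k) - l| + δ ≤ c ^ (k + 1) * |U N - l| + ε / 2 := by
            have : c * |U (N + k) - l| ≤ c * (c ^ k * |U N - l| + ε / 2) :=
              mul_le_mul_of_nonneg_left ih hc0
            have hpow : c * (c ^ k * |U N - l|) = c ^ (k + 1) * |U N - l| := by ring
            nlinarith
          calc |U (N + k + 1) - l| ≤ c * |U (N + k) - l| + δ := h4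
            _ ≤ c ^ (k + 1) * |U N - l| + ε / 2 := h5
    -- choose K with c^K * |U N - l| < ε/2
    have hpowtend : Filter.Tendsto (fun k => c ^ k * |U N - l|) Filter.atTop (nhds 0) := by
      have := (tendsto_pow_atTop_nhds_zero_of_lt_one hc0 hc1).mul_const (|U N - l|)
      simpa using this
    obtain ⟨K, hK⟩ := (Filter.Tendsto.eventually_lt_const (by linarith : (0:ℝ) < ε / 2)
      hpowtend).exists
    refine ⟨N + K, fun m hm => ?_⟩
    have hkey := key (m - N)
    rw [Nat.add_sub_cancel' (le_trans (Nat.le_add_right _ _) hm)] at hkey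
    have hKk : c ^ (m - N) * |U N - l| ≤ c ^ K * |U N - l| := by
      apply mul_le_mul_of_nonneg_right _ (abs_nonneg _)
      exact pow_le_pow_of_le_one hc0 hc1.le (by omega)
    rw [Real.dist_eq]
    linarith
  constructor
  · exact hUtend
  · have h6 : Filter.Tendsto (fun m => 1 - s * U m) Filter.atTop (nhds (1 - s * l)) :=
      Filter.Tendsto.const_sub _ (hUtend.const_mul s)
    have h7 : 1 - s * l = l := by linear_combination -hl
    rw [h7] at h6
    apply h6.congr'
    filter_upwards [Filter.eventually_ge_atTop 1] with m hm
    exact (hL m hm).symm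
end

section
/- Let z : ℕ → ℝ be nonnegative with z(0) = 1, let r ∈ (0,1), suppose Σ_{j=0}^∞ z(j) r^{-j} < ∞ and s := Σ_{j=1}^∞ z(j) r^j < 1. Let P : ℕ → ℝ be positive with P(n) = Σ_{j=0}^∞ z(j) z(n+j) for all n, and suppose lim_{n→∞} P(n+1)/P(n) = r. Then liminf_{n→∞} z(n)/P(n) ≥ 1 − s > 0 and limsup_{n→∞} z(n)/P(n) ≤ 1. -/
/-!
Since `z 0 = 1`, the `j = 0` term of `P n = ∑ z j z(n+j)` gives `z n ≤ P n`, hence the limsup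
bound. Conversely `z (n+j) ≤ P (n+j)`, and once `P(m+1)/P(m) < q` for all `m ≥ n` we have
`P (n+j) ≤ q^j P n`, so `P n ≤ z n + (∑_{j≥1} z j q^j) P n`. This bounds the liminf of
`z n / P n` below by `1 - ∑_{j≥1} z j q^j` for every `q ∈ (r, r⁻¹]`; the series converges
uniformly on `[0, r⁻¹]`, so letting `q → r` gives the bound `1 - s`.
-/

open Filter Topology

section Coefficients

variable {z : ℕ → ℝ}

lemma summable_mul_pow_of_le {R q : ℝ} (hz : ∀ n, 0 ≤ z n)
    (hR : Summable fun j => z j * R ^ j) (hq0 : 0 ≤ q) (hqR : q ≤ R) :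
    Summable fun j => z j * q ^ j :=
  hR.of_nonneg_of_le (fun j => mul_nonneg (hz j) (pow_nonneg hq0 j))
    fun j => mul_le_mul_of_nonneg_left (pow_le_pow_left₀ hq0 hqR j) (hz j)

lemma continuousOn_tsum_succ_mul_pow {R : ℝ} (hz : ∀ n, 0 ≤ z n)
    (hR : Summable fun j => z j * R ^ j) :
    ContinuousOn (fun q => ∑' j, z (j + 1) * q ^ (j + 1)) (Set.Icc 0 R) := by
  refine continuousOn_tsum (u := fun j => z (j + 1) * R ^ (j + 1))
    (fun j => by fun_prop) ((summable_nat_add_iff 1).2 hR) fun j q hq => ?_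
  rw [Real.norm_eq_abs, abs_of_nonneg (mul_nonneg (hz _) (pow_nonneg hq.1 _))]
  exact mul_le_mul_of_nonneg_left (pow_le_pow_left₀ hq.1 hq.2 _) (hz _)

lemma summable_mul_shift (hz : ∀ n, 0 ≤ z n) (hsum : Summable z) (n : ℕ) :
    Summable fun j => z j * z (n + j) :=
  (hsum.mul_right (∑' i, z i)).of_nonneg_of_le (fun j => mul_nonneg (hz j) (hz _))
    fun j => mul_le_mul_of_nonneg_left (hsum.le_tsum _ fun i _ => hz i) (hz j)

lemma tsum_mul_shift_eq_add (hz : ∀ n, 0 ≤ z n) (hz0 : z 0 = 1) (hsum : Summable z) (n : ℕ) :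
    ∑' j, z j * z (n + j) = z n + ∑' j, z (j + 1) * z (n + (j + 1)) := by
  rw [(summable_mul_shift hz hsum n).tsum_eq_zero_add, hz0, one_mul, add_zero]

lemma le_tsum_mul_shift (hz : ∀ n, 0 ≤ z n) (hz0 : z 0 = 1) (hsum : Summable z) (n : ℕ) :
    z n ≤ ∑' j, z j * z (n + j) := by
  rw [tsum_mul_shift_eq_add hz hz0 hsum n, le_add_iff_nonneg_right]
  exact tsum_nonneg fun j => mul_nonneg (hz _) (hz _)

end Coefficients

lemma exists_le_pow_mul_of_tendsto_ratio {P : ℕ → ℝ} {r q : ℝ} (hP : ∀ n, 0 < P n)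
    (hlim : Tendsto (fun n => P (n + 1) / P n) atTop (𝓝 r)) (hrq : r < q) :
    ∃ N, ∀ n ≥ N, ∀ j, P (n + j) ≤ q ^ j * P n := by
  obtain ⟨N, hN⟩ := eventually_atTop.1 (hlim.eventually_lt_const hrq)
  have hq0 : 0 < q := (div_pos (hP _) (hP N)).trans (hN N le_rfl)
  have hstep : ∀ m ≥ N, P (m + 1) ≤ q * P m := fun m hm =>
    (div_le_iff₀ (hP m)).1 (hN m hm).le
  refine ⟨N, fun n hn j => ?_⟩
  induction j with
  | zero => simp
  | succ j ih =>
    calc P (n + (j + 1)) ≤ q * P (n + j) := hstep _ (hn.trans (Nat.le_add_right n j))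
      _ ≤ q * (q ^ j * P n) := mul_le_mul_of_nonneg_left ih hq0.le
      _ = q ^ (j + 1) * P n := by ring

lemma eventually_one_sub_tsum_le_div {z P : ℕ → ℝ} {r q : ℝ} (hz : ∀ n, 0 ≤ z n)
    (hz0 : z 0 = 1) (hsum : Summable z) (hq : Summable fun j => z j * q ^ j)
    (hP : ∀ n, 0 < P n) (hPdef : ∀ n, P n = ∑' j, z j * z (n + j))
    (hPlim : Tendsto (fun n => P (n + 1) / P n) atTop (𝓝 r)) (hrq : r < q) :
    ∀ᶠ n in atTop, 1 - ∑' j, z (j + 1) * q ^ (j + 1) ≤ z n / P n := by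
  obtain ⟨N, hN⟩ := exists_le_pow_mul_of_tendsto_ratio hP hPlim hrq
  filter_upwards [eventually_ge_atTop N] with n hn
  have htail : ∑' j, z (j + 1) * z (n + (j + 1)) ≤ (∑' j, z (j + 1) * q ^ (j + 1)) * P n := by
    rw [← tsum_mul_right]
    refine Summable.tsum_le_tsum (fun j => ?_)
      ((summable_nat_add_iff 1).2 (summable_mul_shift hz hsum n))
      (((summable_nat_add_iff 1).2 hq).mul_right (P n))
    calc z (j + 1) * z (n + (j + 1)) ≤ z (j + 1) * P (n + (j + 1)) :=
          mul_le_mul_of_nonneg_left (hPdef _ ▸ le_tsum_mul_shift hz hz0 hsum _) (hz _)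
      _ ≤ z (j + 1) * (q ^ (j + 1) * P n) := mul_le_mul_of_nonneg_left (hN n hn _) (hz _)
      _ = z (j + 1) * q ^ (j + 1) * P n := by ring
  have hPn := hPdef n
  rw [tsum_mul_shift_eq_add hz hz0 hsum n] at hPn
  rw [le_div_iff₀ (hP n)]
  linarith

theorem stmt7 (z P : ℕ → ℝ) (r : ℝ) (hr : r ∈ Set.Ioo (0 : ℝ) 1)
    (hz : ∀ n, 0 ≤ z n) (hz0 : z 0 = 1)
    (hsum : Summable (fun j => z j * (r⁻¹) ^ j))
    (hs : (∑' j, z (j + 1) * r ^ (j + 1)) < 1)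
    (hP : ∀ n, 0 < P n)
    (hPdef : ∀ n, P n = ∑' j, z j * z (n + j))
    (hPlim : Filter.Tendsto (fun n => P (n + 1) / P n) Filter.atTop (nhds r)) :
    (1 - ∑' j, z (j + 1) * r ^ (j + 1)) ≤
      Filter.liminf (fun n => z n / P n) Filter.atTop ∧
    0 < 1 - ∑' j, z (j + 1) * r ^ (j + 1) ∧
    Filter.limsup (fun n => z n / P n) Filter.atTop ≤ 1 := by
  obtain ⟨hr0, hr1⟩ := hr
  have hrr : r < r⁻¹ := hr1.trans ((one_lt_inv₀ hr0).2 hr1)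
  have hsumz : Summable z := by
    simpa using summable_mul_pow_of_le hz hsum zero_le_one ((one_le_inv₀ hr0).2 hr1.le)
  have hle_one : ∀ n, z n / P n ≤ 1 := fun n =>
    (div_le_one (hP n)).2 (hPdef n ▸ le_tsum_mul_shift hz hz0 hsumz n)
  refine ⟨?_, by linarith, limsup_le_of_le
    (isCoboundedUnder_le_of_le atTop fun n => div_nonneg (hz n) (hP n).le)
    (Eventually.of_forall hle_one)⟩
  have hcont : Tendsto (fun q => 1 - ∑' j, z (j + 1) * q ^ (j + 1)) (𝓝[Set.Ioo r r⁻¹] r)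
      (𝓝 (1 - ∑' j, z (j + 1) * r ^ (j + 1))) :=
    (((continuousOn_tsum_succ_mul_pow hz hsum).continuousWithinAt ⟨hr0.le, hrr.le⟩).mono
      fun q hq => ⟨hr0.le.trans hq.1.le, hq.2.le⟩).const_sub 1
  have := left_nhdsWithin_Ioo_neBot hrr
  refine le_of_tendsto hcont (eventually_nhdsWithin_of_forall fun q hq => ?_)
  exact le_liminf_of_le (isCoboundedUnder_ge_of_le atTop hle_one) <| eventually_one_sub_tsum_le_div hz hz0 hsumz
    (summable_mul_pow_of_le hz hsum (hr0.trans hq.1).le hq.2.le) hP hPdef hPlim hq.1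
end

section
/- Let b : ℕ → ℝ be nonnegative with b(0)=0, λ₁ > 0, and let z solve z(0)=1, z(n) = λ₁ Σ_{j=0}^{n-1} b(n-j) z(j). Suppose λ₁ Σ_{j=1}^∞ b(j) < 1 (so z(n) → 0). Then there exist C₁ > 0 and α₁ ∈ (0,1) with b(k) ≤ C₁ α₁^k for all k ≥ 1 if and only if there exist C₄ > 0 and α₄ ∈ (0,1) with z(k) ≤ C₄ α₄^k for all k ≥ 0. -/
/-!
If `b k ≤ C α^k`, the generating function `R ↦ ∑ b k R^k` converges beyond `R = 1` and is
continuous there, so `λ ∑ b k R^k ≤ 1` for some `R > 1`; a strong induction on the Volterra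
equation then gives `z n ≤ R⁻ⁿ`. Conversely, the `j = 0` term of the equation gives
`z n ≥ λ b n z 0 = λ b n`.
-/

open Finset Filter Topology

section GeometricBound

variable {b : ℕ → ℝ} {C α : ℝ}

lemma exists_forall_le_mul_pow_of_forall_one_le (hα : 0 < α)
    (hbC : ∀ k, 1 ≤ k → b k ≤ C * α ^ k) : ∃ C', ∀ k, b k ≤ C' * α ^ k := by
  refine ⟨max C (b 0), fun k => ?_⟩
  rcases Nat.eq_zero_or_pos k with rfl | hk
  · simp
  · exact (hbC k hk).trans (by gcongr; exact le_max_left _ _)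

lemma mul_pow_le_of_le_mul_pow (hbC : ∀ k, b k ≤ C * α ^ k) {R : ℝ} (hR : 0 ≤ R) (k : ℕ) :
    b k * R ^ k ≤ C * (α * R) ^ k := by
  rw [mul_pow, ← mul_assoc]
  exact mul_le_mul_of_nonneg_right (hbC k) (pow_nonneg hR k)

variable (hb : ∀ k, 0 ≤ b k) (hα0 : 0 ≤ α) (hbC : ∀ k, b k ≤ C * α ^ k)
include hb hα0 hbC

lemma summable_mul_pow_of_le_mul_pow {R : ℝ} (hR : 0 ≤ R) (hαR : α * R < 1) :
    Summable fun k => b k * R ^ k :=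
  .of_nonneg_of_le (fun k => mul_nonneg (hb k) (pow_nonneg hR k))
    (mul_pow_le_of_le_mul_pow hbC hR)
    ((summable_geometric_of_lt_one (mul_nonneg hα0 hR) hαR).mul_left C)

variable (hα1 : α < 1)
include hα1

lemma tendsto_tsum_mul_pow_nhds_one :
    Tendsto (fun R => ∑' k, b k * R ^ k) (𝓝 1) (𝓝 (∑' k, b k)) := by
  have hC : 0 ≤ C := by simpa using (hb 0).trans (hbC 0)
  obtain ⟨γ, hαγ, hγ1⟩ := exists_between hα1
  have hnear : ∀ᶠ R in 𝓝 (1 : ℝ), α * |R| < γ :=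
    ((show Continuous fun R : ℝ => α * |R| by fun_prop).tendsto' 1 α (by simp)).eventually
      (gt_mem_nhds hαγ)
  refine tendsto_tsum_of_dominated_convergence (bound := fun k => C * γ ^ k)
    ((summable_geometric_of_lt_one (by linarith) hγ1).mul_left C)
    (fun k => by simpa using ((continuous_pow k).const_mul (b k)).tendsto 1) ?_
  filter_upwards [hnear] with R hR k
  rw [norm_mul, norm_pow, Real.norm_of_nonneg (hb k), Real.norm_eq_abs]
  exact (mul_pow_le_of_le_mul_pow hbC (abs_nonneg R) k).trans (by gcongr)

lemma exists_one_lt_tsum_mul_pow_lt {lam : ℝ} (hlt : lam * ∑' k, b k < 1) :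
    ∃ R > 1, Summable (fun k => b k * R ^ k) ∧ lam * ∑' k, b k * R ^ k < 1 := by
  have hsmall : ∀ᶠ R in 𝓝 (1 : ℝ), α * R < 1 :=
    ((continuous_const_mul α).tendsto' 1 α (mul_one α)).eventually (gt_mem_nhds hα1)
  have hlim : ∀ᶠ R in 𝓝 (1 : ℝ), lam * ∑' k, b k * R ^ k < 1 :=
    ((tendsto_tsum_mul_pow_nhds_one hb hα0 hbC hα1).const_mul lam).eventually (gt_mem_nhds hlt)
  obtain ⟨R, hR1, hαR, hRlt⟩ := (eventually_mem_nhdsWithin.and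
    (nhdsWithin_le_nhds (hsmall.and hlim))).exists (f := 𝓝[>] (1 : ℝ))
  exact ⟨R, hR1, summable_mul_pow_of_le_mul_pow hb hα0 hbC (by linarith [hR1.out]) hαR, hRlt⟩

end GeometricBound

lemma sum_range_sub_le_tsum {g : ℕ → ℝ} (hg : ∀ k, 0 ≤ g k) (hs : Summable g) (n : ℕ) :
    ∑ j ∈ range n, g (n - j) ≤ ∑' k, g k :=
  calc ∑ j ∈ range n, g (n - j)
      ≤ ∑ j ∈ range (n + 1), g (n - j) :=
        sum_le_sum_of_subset_of_nonneg (range_subset_range.2 n.le_succ) fun _ _ _ => hg _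
    _ = ∑ j ∈ range (n + 1), g j := by simpa using sum_range_reflect g (n + 1)
    _ ≤ ∑' k, g k := hs.sum_le_tsum _ fun k _ => hg k

section Volterra

variable {b z : ℕ → ℝ} {lam : ℝ} (hb : ∀ k, 0 ≤ b k) (hlam : 0 ≤ lam)
include hb hlam

lemma le_inv_pow_of_le_volterra {R : ℝ} (hR : 0 < R) (hsum : Summable fun k => b k * R ^ k)
    (hle : lam * ∑' k, b k * R ^ k ≤ 1) (hz0 : z 0 ≤ 1)
    (hz : ∀ n, 1 ≤ n → z n ≤ lam * ∑ j ∈ range n, b (n - j) * z j) (n : ℕ) :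
    z n ≤ R⁻¹ ^ n := by
  induction n using Nat.strong_induction_on with
  | _ n ih =>
    rcases Nat.eq_zero_or_pos n with rfl | hn
    · simpa using hz0
    have hshift : ∀ j ∈ range n, b (n - j) * R⁻¹ ^ j = R⁻¹ ^ n * (b (n - j) * R ^ (n - j)) := by
      intro j hj
      obtain ⟨m, rfl⟩ : ∃ m, n = j + m := ⟨n - j, by simp at hj; omega⟩
      have hcancel : R⁻¹ ^ m * R ^ m = 1 := by rw [← mul_pow, inv_mul_cancel₀ hR.ne', one_pow]
      rw [Nat.add_sub_cancel_left, pow_add]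
      linear_combination (-(b m * R⁻¹ ^ j)) * hcancel
    have hkernel : lam * ∑ j ∈ range n, b (n - j) * R ^ (n - j) ≤ 1 :=
      (mul_le_mul_of_nonneg_left (sum_range_sub_le_tsum (fun k => mul_nonneg (hb k)
        (pow_nonneg hR.le k)) hsum n) hlam).trans hle
    calc z n ≤ lam * ∑ j ∈ range n, b (n - j) * z j := hz n hn
      _ ≤ lam * ∑ j ∈ range n, b (n - j) * R⁻¹ ^ j := by
          gcongr with j hj
          · exact hb _
          · exact ih j (mem_range.1 hj)
      _ = R⁻¹ ^ n * (lam * ∑ j ∈ range n, b (n - j) * R ^ (n - j)) := by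
          rw [sum_congr rfl hshift, ← mul_sum, mul_left_comm]
      _ ≤ R⁻¹ ^ n := mul_le_of_le_one_right (by positivity) hkernel

variable (hz : ∀ n, 1 ≤ n → lam * ∑ j ∈ range n, b (n - j) * z j ≤ z n)
include hz

lemma nonneg_of_volterra_le (hz0 : 0 ≤ z 0) (n : ℕ) : 0 ≤ z n := by
  induction n using Nat.strong_induction_on with
  | _ n ih =>
    rcases Nat.eq_zero_or_pos n with rfl | hn
    · exact hz0
    exact (mul_nonneg hlam (sum_nonneg fun j hj =>
      mul_nonneg (hb _) (ih j (mem_range.1 hj)))).trans (hz n hn)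

lemma mul_le_of_volterra_le (hz0 : 0 ≤ z 0) {n : ℕ} (hn : 1 ≤ n) : lam * (b n * z 0) ≤ z n := by
  refine le_trans ?_ (hz n hn)
  gcongr
  simpa using single_le_sum (f := fun j => b (n - j) * z j)
    (fun j _ => mul_nonneg (hb _) (nonneg_of_volterra_le hb hlam hz hz0 j)) (mem_range.2 hn)

end Volterra

theorem stmt11_general (b z : ℕ → ℝ) (lam : ℝ) (hb : ∀ n, 0 ≤ b n)
    (hlam : 0 < lam) (hz0 : z 0 = 1)
    (hz : ∀ n, 1 ≤ n → z n = lam * ∑ j ∈ Finset.range n, b (n - j) * z j)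
    (hlt : lam * ∑' j, b j < 1) :
    (∃ C₁ > (0 : ℝ), ∃ α₁ ∈ Set.Ioo (0 : ℝ) 1, ∀ k, 1 ≤ k → b k ≤ C₁ * α₁ ^ k) ↔
    (∃ C₄ > (0 : ℝ), ∃ α₄ ∈ Set.Ioo (0 : ℝ) 1, ∀ k, z k ≤ C₄ * α₄ ^ k) := by
  constructor
  · rintro ⟨C₁, -, α, ⟨hα0, hα1⟩, hbC⟩
    obtain ⟨C, hC⟩ := exists_forall_le_mul_pow_of_forall_one_le hα0 hbC
    obtain ⟨R, hR1, hsum, hRlt⟩ := exists_one_lt_tsum_mul_pow_lt hb hα0.le hC hα1 hlt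
    refine ⟨1, one_pos, R⁻¹, ⟨by positivity, inv_lt_one_of_one_lt₀ hR1⟩, fun k => ?_⟩
    simpa using le_inv_pow_of_le_volterra hb hlam.le (by linarith) hsum hRlt.le hz0.le
      (fun n hn => (hz n hn).le) k
  · rintro ⟨C, hC, α, hα, hzC⟩
    refine ⟨C / lam, div_pos hC hlam, α, hα, fun k hk => ?_⟩
    have hbz := mul_le_of_volterra_le hb hlam.le (fun n hn => (hz n hn).ge) (hz0 ▸ zero_le_one) hk
    rw [hz0, mul_one] at hbz
    rw [div_mul_eq_mul_div, le_div_iff₀ hlam]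
    linarith [hzC k]

theorem stmt11 (b z : ℕ → ℝ) (lam : ℝ) (hb : ∀ n, 0 ≤ b n) (hb0 : b 0 = 0)
    (hlam : 0 < lam) (hz0 : z 0 = 1)
    (hz : ∀ n, 1 ≤ n → z n = lam * ∑ j ∈ Finset.range n, b (n - j) * z j)
    (hbsum : Summable b) (hlt : lam * ∑' j, b j < 1) :
    (∃ C₁ > (0 : ℝ), ∃ α₁ ∈ Set.Ioo (0 : ℝ) 1, ∀ k, 1 ≤ k → b k ≤ C₁ * α₁ ^ k) ↔
    (∃ C₄ > (0 : ℝ), ∃ α₄ ∈ Set.Ioo (0 : ℝ) 1, ∀ k, z k ≤ C₄ * α₄ ^ k) :=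
  stmt11_general b z lam hb hlam hz0 hz hlt
end

section
/- Let x : ℕ → ℝ solve the linear convolution equation x(n+1) = f(n) + Σ_{i=0}^n F(n-i) x(i), x(0) = x₀, where F, f : ℕ → ℝ, r > 0, Σ_{i=0}^∞ r^{-(i+1)} |F(i)| < 1, Σ_{l=0}^∞ r^{-l} |f(l)| < ∞, and Σ_{j=0}^∞ r^{-j} |x(j)| < ∞. Then Σ_{j=0}^∞ r^{-j} x(j) = (r − Σ_{k=0}^∞ r^{-k} F(k))^{-1} (r x₀ + Σ_{l=0}^∞ r^{-l} f(l)). -/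
/-!
Weight the equation by `ρ = r⁻¹`: with `X = ∑ ρʲ x j`, `Φ = ∑ ρᵏ F k` and `C = ∑ ρˡ f l`, multiplying
the equation for `x (n+1)` by `ρⁿ⁺¹` and summing turns the convolution into the Cauchy product
`Φ * X`, so `X = x₀ + ρ (C + Φ X)`. The bound `∑ ρᵏ⁺¹ |F k| < 1` gives `Φ < r`, and solving the
linear equation yields the formula.
-/

open Finset

section WeightedSums

variable {R : Type*} [NormedCommRing R] [CompleteSpace R]

theorem hasSum_pow_mul_sum_range_mul {a b : ℕ → R} {ρ : R}
    (ha : Summable fun n ↦ ‖ρ ^ n * a n‖) (hb : Summable fun n ↦ ‖ρ ^ n * b n‖) :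
    HasSum (fun n ↦ ρ ^ n * ∑ i ∈ range (n + 1), a (n - i) * b i)
      ((∑' n, ρ ^ n * a n) * ∑' n, ρ ^ n * b n) := by
  have hterm : ∀ n, ∑ k ∈ range (n + 1), ρ ^ k * b k * (ρ ^ (n - k) * a (n - k)) =
      ρ ^ n * ∑ i ∈ range (n + 1), a (n - i) * b i := by
    intro n
    rw [mul_sum]
    refine sum_congr rfl fun k hk ↦ ?_
    have hkn : k + (n - k) = n := Nat.add_sub_cancel' (Nat.lt_succ_iff.mp (mem_range.mp hk))
    rw [← hkn, pow_add, hkn]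
    ring
  rw [mul_comm, tsum_mul_tsum_eq_tsum_sum_range_of_summable_norm hb ha]
  simp only [hterm]
  simpa only [hterm] using (summable_norm_sum_mul_range_of_summable_norm hb ha).of_norm.hasSum

theorem tsum_pow_mul_eq_of_volterra {x f F : ℕ → R} {ρ : R}
    (hx : ∀ n, x (n + 1) = f n + ∑ i ∈ range (n + 1), F (n - i) * x i)
    (hF : Summable fun n ↦ ‖ρ ^ n * F n‖) (hf : Summable fun n ↦ ρ ^ n * f n)
    (hxs : Summable fun n ↦ ‖ρ ^ n * x n‖) :
    ∑' n, ρ ^ n * x n =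
      x 0 + ρ * ((∑' n, ρ ^ n * f n) + (∑' n, ρ ^ n * F n) * ∑' n, ρ ^ n * x n) := by
  have hshift : HasSum (fun n ↦ ρ ^ (n + 1) * x (n + 1))
      (ρ * ((∑' n, ρ ^ n * f n) + (∑' n, ρ ^ n * F n) * ∑' n, ρ ^ n * x n)) := by
    refine ((hf.hasSum.add (hasSum_pow_mul_sum_range_mul hF hxs)).mul_left ρ).congr_fun ?_
    intro n
    rw [hx n, pow_succ']
    ring
  have hall := (hasSum_nat_add_iff (f := fun n ↦ ρ ^ n * x n) 1).mp hshift
  rw [sum_range_one, pow_zero, one_mul] at hall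
  exact hall.tsum_eq.trans (add_comm _ _)

end WeightedSums

theorem summable_norm_inv_pow_mul_iff {r : ℝ} (hr : 0 < r) {a : ℕ → ℝ} :
    (Summable fun n ↦ ‖r⁻¹ ^ n * a n‖) ↔ Summable fun n ↦ r⁻¹ ^ n * |a n| := by
  simp only [Real.norm_eq_abs, abs_mul, abs_pow, abs_of_pos (inv_pos.mpr hr)]

theorem tsum_inv_pow_mul_lt {r : ℝ} (hr : 0 < r) {F : ℕ → ℝ}
    (hF : Summable fun n ↦ r⁻¹ ^ (n + 1) * |F n|) (hlt : ∑' n, r⁻¹ ^ (n + 1) * |F n| < 1) :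
    ∑' n, r⁻¹ ^ n * F n < r := by
  have hρ : 0 < r⁻¹ := inv_pos.mpr hr
  have hscale : ∀ n, r⁻¹ ^ n * |F n| = r * (r⁻¹ ^ (n + 1) * |F n|) := fun n ↦ by
    rw [pow_succ', ← mul_assoc, mul_inv_cancel_left₀ hr.ne']
  have habs : Summable fun n ↦ r⁻¹ ^ n * |F n| := by
    simpa only [hscale] using hF.mul_left r
  calc ∑' n, r⁻¹ ^ n * F n
      ≤ ∑' n, r⁻¹ ^ n * |F n| :=
        ((summable_norm_inv_pow_mul_iff hr).mpr habs).of_norm.tsum_le_tsum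
          (fun n ↦ mul_le_mul_of_nonneg_left (le_abs_self _) (pow_nonneg hρ.le n)) habs
    _ = r * ∑' n, r⁻¹ ^ (n + 1) * |F n| := by simp only [hscale, tsum_mul_left]
    _ < r := mul_lt_of_lt_one_right hr hlt

theorem stmt14 (x f F : ℕ → ℝ) (x₀ r : ℝ) (hr : 0 < r)
    (hx0 : x 0 = x₀)
    (hx : ∀ n, x (n + 1) = f n + ∑ i ∈ Finset.range (n + 1), F (n - i) * x i)
    (hF : Summable (fun i => (r⁻¹) ^ (i + 1) * |F i|))
    (hFlt : (∑' i, (r⁻¹) ^ (i + 1) * |F i|) < 1)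
    (hf : Summable (fun l => (r⁻¹) ^ l * |f l|))
    (hxsum : Summable (fun j => (r⁻¹) ^ j * |x j|)) :
    ∑' j, (r⁻¹) ^ j * x j =
      (r - ∑' k, (r⁻¹) ^ k * F k)⁻¹ * (r * x₀ + ∑' l, (r⁻¹) ^ l * f l) := by
  have hFn : Summable fun n ↦ ‖r⁻¹ ^ n * F n‖ := by
    rw [summable_norm_inv_pow_mul_iff hr, ← summable_mul_left_iff (inv_ne_zero hr.ne')]
    simpa only [pow_succ', mul_assoc] using hF
  have hfs := ((summable_norm_inv_pow_mul_iff hr).mpr hf).of_norm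
  have hX := tsum_pow_mul_eq_of_volterra hx hFn hfs ((summable_norm_inv_pow_mul_iff hr).mpr hxsum)
  have hden : r - ∑' k, r⁻¹ ^ k * F k ≠ 0 := (sub_pos.mpr (tsum_inv_pow_mul_lt hr hF hFlt)).ne'
  rw [eq_inv_mul_iff_mul_eq₀ hden, ← hx0]
  linear_combination r * hX + ((∑' n, r⁻¹ ^ n * f n) + (∑' n, r⁻¹ ^ n * F n) *
    ∑' n, r⁻¹ ^ n * x n) * mul_inv_cancel₀ hr.ne'
end

section
/- Let H : ℕ × ℕ → ℝ with H(n,i) = 0 for i > n, and suppose there exist integers 0 < M < N such that sup_{n ≥ N} Σ_{i=M}^n |H(n,i)| < 1 and sup_{n ≥ M} Σ_{i=0}^M |H(n,i)| < ∞. Then there exists K > 0, independent of z₀, such that every solution of z(n+1) = Σ_{i=0}^n H(n,i) z(i) with z(0) = z₀ satisfies |z(n)| ≤ K |z₀| for all n ≥ 0. -/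
/-!
On any finite stretch `n ≤ N` the recursion gives `|z n| ≤ P |z₀|` with `P` depending only
on `H`, by bounding each step crudely by `∑ |H n i|`. Beyond `N`, split `z (m + 1)` into the
indices below `M`, which are already controlled by `P |z₀|` and weigh at most `C`, and those
from `M` on, which weigh at most `c < 1`. A strong induction then closes once `K ≥ P` satisfies
`C P + c K ≤ K`, e.g. `K = P (1 + C / (1 - c))`.
-/

open Finset

def IsVolterraSolution (H : ℕ → ℕ → ℝ) (z : ℕ → ℝ) : Prop :=
  ∀ n, z (n + 1) = ∑ i ∈ range (n + 1), H n i * z i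

lemma sum_abs_mul_le_of_abs_le {ι : Type*} (s : Finset ι) (a x : ι → ℝ) {B : ℝ}
    (hx : ∀ i ∈ s, |x i| ≤ B) : ∑ i ∈ s, |a i| * |x i| ≤ (∑ i ∈ s, |a i|) * B := by
  rw [sum_mul]
  exact sum_le_sum fun i hi => mul_le_mul_of_nonneg_left (hx i hi) (abs_nonneg _)

namespace IsVolterraSolution

variable {H : ℕ → ℕ → ℝ} {z : ℕ → ℝ}

lemma abs_succ_le (hz : IsVolterraSolution H z) (n : ℕ) :
    |z (n + 1)| ≤ ∑ i ∈ range (n + 1), |H n i| * |z i| := by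
  rw [hz n]
  simpa only [abs_mul] using abs_sum_le_sum_abs (fun i => H n i * z i) _

lemma abs_le_of_forall_le_of_tail {M N : ℕ} {c C B K : ℝ} (hz : IsVolterraSolution H z)
    (hMN : M ≤ N) (hc : ∀ n, N ≤ n → ∑ i ∈ Icc M n, |H n i| ≤ c)
    (hC : ∀ n, M ≤ n → ∑ i ∈ Icc 0 M, |H n i| ≤ C)
    (hB : ∀ n ≤ N, |z n| ≤ B) (hBK : B ≤ K) (hK : C * B + c * K ≤ K) (n : ℕ) :
    |z n| ≤ K := by
  have hB0 : 0 ≤ B := (abs_nonneg _).trans (hB 0 N.zero_le)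
  induction n using Nat.strong_induction_on with
  | _ n ih =>
    rcases le_or_gt n N with hn | hn
    · exact (hB n hn).trans hBK
    obtain ⟨m, rfl⟩ : ∃ m, n = m + 1 := ⟨n - 1, by omega⟩
    have head : ∑ i ∈ range M, |H m i| * |z i| ≤ C * B := by
      refine (sum_abs_mul_le_of_abs_le _ _ _ fun i hi => hB i ?_).trans ?_
      · exact (mem_range.mp hi).le.trans hMN
      refine mul_le_mul_of_nonneg_right ((sum_le_sum_of_subset_of_nonneg ?_ ?_).trans
        (hC m (by omega))) hB0
      · exact fun i hi => mem_Icc.mpr ⟨i.zero_le, (mem_range.mp hi).le⟩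
      · exact fun i _ _ => abs_nonneg _
    have tail : ∑ i ∈ Ico M (m + 1), |H m i| * |z i| ≤ c * K := by
      refine (sum_abs_mul_le_of_abs_le _ _ _ fun i hi => ih i (mem_Ico.mp hi).2).trans ?_
      rw [Ico_add_one_right_eq_Icc]
      exact mul_le_mul_of_nonneg_right (hc m (by omega)) (hB0.trans hBK)
    calc |z (m + 1)| ≤ ∑ i ∈ range (m + 1), |H m i| * |z i| := hz.abs_succ_le m
      _ = ∑ i ∈ range M, |H m i| * |z i| + ∑ i ∈ Ico M (m + 1), |H m i| * |z i| :=
          (sum_range_add_sum_Ico _ (by omega)).symm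
      _ ≤ K := by linarith

end IsVolterraSolution

lemma exists_forall_abs_le_of_isVolterraSolution (H : ℕ → ℕ → ℝ) (N : ℕ) :
    ∃ P > (0 : ℝ), ∀ z, IsVolterraSolution H z → ∀ n ≤ N, |z n| ≤ P * |z 0| := by
  induction N with
  | zero => exact ⟨1, one_pos, fun z _ n hn => by simp [Nat.le_zero.mp hn]⟩
  | succ N ih =>
    obtain ⟨P, hP0, hP⟩ := ih
    set G := ∑ i ∈ range (N + 1), |H N i|
    refine ⟨max P (G * P), lt_max_of_lt_left hP0, fun z hz n hn => ?_⟩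
    have hz0 := abs_nonneg (z 0)
    rcases Nat.le_succ_iff.mp hn with hnN | rfl
    · exact (hP z hz n hnN).trans
        (mul_le_mul_of_nonneg_right (le_max_left _ _) hz0)
    calc |z (N + 1)| ≤ ∑ i ∈ range (N + 1), |H N i| * |z i| := hz.abs_succ_le N
      _ ≤ G * (P * |z 0|) := sum_abs_mul_le_of_abs_le _ _ _ fun i hi =>
          hP z hz i (Nat.lt_succ_iff.mp (mem_range.mp hi))
      _ ≤ max P (G * P) * |z 0| := by
          rw [← mul_assoc]; exact mul_le_mul_of_nonneg_right (le_max_right _ _) hz0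

theorem stmt17_general (H : ℕ → ℕ → ℝ)
    (M N : ℕ) (hMN : M < N)
    (h1 : ∃ c < (1 : ℝ), ∀ n, N ≤ n → ∑ i ∈ Finset.Icc M n, |H n i| ≤ c)
    (h2 : ∃ C : ℝ, ∀ n, M ≤ n → ∑ i ∈ Finset.Icc 0 M, |H n i| ≤ C) :
    ∃ K > (0 : ℝ), ∀ z : ℕ → ℝ,
      (∀ n, z (n + 1) = ∑ i ∈ Finset.range (n + 1), H n i * z i) →
      ∀ n, |z n| ≤ K * |z 0| := by
  obtain ⟨c, hc1, hc⟩ := h1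
  obtain ⟨C, hC⟩ := h2
  have hC0 : 0 ≤ C := (sum_nonneg fun i _ => abs_nonneg _).trans (hC M le_rfl)
  obtain ⟨P, hP0, hP⟩ := exists_forall_abs_le_of_isVolterraSolution H N
  have hc1' : 0 < 1 - c := sub_pos.mpr hc1
  set K := P * (1 + C / (1 - c))
  have hPK : P ≤ K := le_mul_of_one_le_right hP0.le (le_add_of_nonneg_right (by positivity))
  have hK : C * P + c * K ≤ K := by
    have hK' : (1 - c) * K = (1 - c) * P + C * P := by simp only [K]; field_simp
    linarith [mul_pos hc1' hP0]
  refine ⟨K, hP0.trans_le hPK, fun z hz n => ?_⟩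
  have hz0 := abs_nonneg (z 0)
  exact IsVolterraSolution.abs_le_of_forall_le_of_tail hz hMN.le hc hC (hP z hz)
    (mul_le_mul_of_nonneg_right hPK hz0) (by linear_combination |z 0| * hK) n

theorem stmt17 (H : ℕ → ℕ → ℝ) (hH : ∀ n i, n < i → H n i = 0)
    (M N : ℕ) (hM : 0 < M) (hMN : M < N)
    (h1 : ∃ c < (1 : ℝ), ∀ n, N ≤ n → ∑ i ∈ Finset.Icc M n, |H n i| ≤ c)
    (h2 : ∃ C : ℝ, ∀ n, M ≤ n → ∑ i ∈ Finset.Icc 0 M, |H n i| ≤ C) :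
    ∃ K > (0 : ℝ), ∀ z : ℕ → ℝ,
      (∀ n, z (n + 1) = ∑ i ∈ Finset.range (n + 1), H n i * z i) →
      ∀ n, |z n| ≤ K * |z 0| :=
  stmt17_general H M N hMN h1 h2
end
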